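/- Let C ⊆ ℍⁿ_κ be a closed κ-hyperbolically convex set, p ∈ ℍⁿ_κ and u a nonzero Lorentz projection of p into the cone K_C spanned by C. Then the intrinsic κ-projection satisfies P_C(p) = u/√(−κ⟨u,u⟩). -/

import Mathlib

noncomputable section

/-- Lorentzian inner product on ℝ^{n+1}. -/
def lip {n : ℕ} (x y : Fin (n+1) → ℝ) : ℝ :=
  (∑ i : Fin n, x i.castSucc * y i.castSucc) - x (Fin.last n) * y (Fin.last n)

/-- Lorentzian norm (of vectors with nonnegative self-product). -/
def lnorm {n : ℕ} (x : Fin (n+1) → ℝ) : ℝ := Real.sqrt (lip x x)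

/-- Euclidean dot product. -/
def edot {n : ℕ} (x y : Fin (n+1) → ℝ) : ℝ := ∑ i, x i * y i

/-- The matrix J = diag(1,…,1,−1) as a map. -/
def Jm {n : ℕ} (x : Fin (n+1) → ℝ) : Fin (n+1) → ℝ :=
  fun i => if i = Fin.last n then -(x i) else x i

/-- The κ-hyperbolic space form (hyperboloid model). -/
def Hyp {n : ℕ} (κ : ℝ) : Set (Fin (n+1) → ℝ) :=
  {p | lip p p = -1/κ ∧ 0 < p (Fin.last n)}

/-- Inverse hyperbolic cosine. -/
def arcosh (x : ℝ) : ℝ := Real.log (x + Real.sqrt (x^2 - 1))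

/-- Intrinsic distance on the κ-hyperbolic space form. -/
def dH {n : ℕ} (κ : ℝ) (p q : Fin (n+1) → ℝ) : ℝ :=
  (1 / Real.sqrt κ) * arcosh (-(κ * lip p q))

/-- Lorentzian projection onto the tangent space at p. -/
def projT {n : ℕ} (κ : ℝ) (p x : Fin (n+1) → ℝ) : Fin (n+1) → ℝ :=
  x + (κ * lip p x) • p

/-- Logarithm map of the κ-hyperbolic space form. -/
def logH {n : ℕ} (κ : ℝ) (p q : Fin (n+1) → ℝ) : Fin (n+1) → ℝ :=
  (dH κ p q / lnorm (projT κ p q)) • projT κ p q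

/-- Exponential map of the κ-hyperbolic space form. -/
def expH {n : ℕ} (κ : ℝ) (p v : Fin (n+1) → ℝ) : Fin (n+1) → ℝ :=
  Real.cosh (Real.sqrt κ * lnorm v) • p +
    (Real.sinh (Real.sqrt κ * lnorm v) / (Real.sqrt κ * lnorm v)) • v

/-- The cone spanned by a set. -/
def coneOf {n : ℕ} (C : Set (Fin (n+1) → ℝ)) : Set (Fin (n+1) → ℝ) :=
  {x | ∃ t : ℝ, 0 ≤ t ∧ ∃ p ∈ C, x = t • p}

/-- The Lorentz cone. -/
def LorentzCone {n : ℕ} : Set (Fin (n+1) → ℝ) :=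
  {x | lip x x ≤ 0 ∧ 0 ≤ x (Fin.last n)}

/-- The interior of the Lorentz cone. -/
def LorentzConeInt {n : ℕ} : Set (Fin (n+1) → ℝ) :=
  {x | lip x x < 0 ∧ 0 < x (Fin.last n)}

/-!
Write `u = t • q` with `t > 0` and `q ∈ C`. Testing the projection inequality against `0` and
`2u` gives `⟨p - u, u⟩ = 0`, hence `⟨p - u, z⟩ ≤ 0` on the cone. For `z ∈ C` the reversed
Cauchy–Schwarz inequality `⟨q, z⟩ ≤ -1/κ` on the hyperboloid then yields
`⟨p, z⟩ ≤ ⟨u, z⟩ ≤ -t/κ = ⟨u, u⟩ / t = ⟨p, u⟩ / t = ⟨p, q⟩`, so `q` is the maximizer `P_C(p)`,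
and `√(-κ⟨u, u⟩) = t`.
-/

section Lorentz

variable {n : ℕ}

lemma lip_smul_left (x y : Fin (n+1) → ℝ) (t : ℝ) : lip (t • x) y = t * lip x y := by
  simp only [lip, Pi.smul_apply, smul_eq_mul, mul_sub, Finset.mul_sum, mul_assoc]

lemma lip_smul_right (x y : Fin (n+1) → ℝ) (t : ℝ) : lip x (t • y) = t * lip x y := by
  simp only [lip, Pi.smul_apply, smul_eq_mul, mul_sub, Finset.mul_sum, mul_left_comm]

lemma lip_sub_left (x y z : Fin (n+1) → ℝ) : lip (x - z) y = lip x y - lip z y := by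
  simp only [lip, Pi.sub_apply, sub_mul, Finset.sum_sub_distrib]
  ring

lemma lip_sub_right (x y z : Fin (n+1) → ℝ) : lip x (y - z) = lip x y - lip x z := by
  simp only [lip, Pi.sub_apply, mul_sub, Finset.sum_sub_distrib]
  ring

/-- Reversed Cauchy–Schwarz inequality on the upper sheet of the hyperboloid. -/
lemma lip_le_of_mem_Hyp {κ : ℝ} (hκ : 0 < κ) {x y : Fin (n+1) → ℝ}
    (hx : x ∈ Hyp κ) (hy : y ∈ Hyp κ) : lip x y ≤ -1/κ := by
  obtain ⟨hxx, hx0⟩ := hx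
  obtain ⟨hyy, hy0⟩ := hy
  simp only [lip, neg_div] at hxx hyy ⊢
  set a := x (Fin.last n)
  set b := y (Fin.last n)
  set S := ∑ i : Fin n, x i.castSucc * y i.castSucc
  set A := ∑ i : Fin n, x i.castSucc * x i.castSucc
  set B := ∑ i : Fin n, y i.castSucc * y i.castSucc
  have hA : 0 ≤ A := Finset.sum_nonneg fun i _ => mul_self_nonneg _
  have hB : 0 ≤ B := Finset.sum_nonneg fun i _ => mul_self_nonneg _
  have hCS : S ^ 2 ≤ A * B := by
    simpa only [pow_two] using Finset.sum_mul_sq_le_sq_mul_sq Finset.univ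
      (fun i : Fin n => x i.castSucc) (fun i : Fin n => y i.castSucc)
  have hc : 0 < 1/κ := one_div_pos.mpr hκ
  have hab : 1/κ ≤ a * b := by nlinarith [mul_pos hx0 hy0]
  -- `(ab - 1/κ)² - AB = (a - b)²/κ ≥ 0`, with `ab - 1/κ ≥ 0`
  nlinarith [mul_nonneg hc.le (sq_nonneg (a - b))]

lemma sqrt_neg_mul_lip_smul_self {κ : ℝ} (hκ : κ ≠ 0) {q : Fin (n+1) → ℝ} (hq : q ∈ Hyp κ)
    {t : ℝ} (ht : 0 ≤ t) : Real.sqrt (-(κ * lip (t • q) (t • q))) = t := by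
  rw [lip_smul_left, lip_smul_right, hq.1]
  have : -(κ * (t * (t * (-1 / κ)))) = t * t := by field_simp
  rw [this, Real.sqrt_mul_self ht]

lemma smul_mem_coneOf {C : Set (Fin (n+1) → ℝ)} {x : Fin (n+1) → ℝ} (hx : x ∈ coneOf C)
    {s : ℝ} (hs : 0 ≤ s) : s • x ∈ coneOf C := by
  obtain ⟨t, ht, q, hq, rfl⟩ := hx
  exact ⟨s * t, mul_nonneg hs ht, q, hq, smul_smul s t q⟩

lemma subset_coneOf (C : Set (Fin (n+1) → ℝ)) : C ⊆ coneOf C :=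
  fun z hz => ⟨1, zero_le_one, z, hz, (one_smul ℝ z).symm⟩

def IsLorentzProj (K : Set (Fin (n+1) → ℝ)) (p u : Fin (n+1) → ℝ) : Prop :=
  u ∈ K ∧ ∀ z ∈ K, lip (p - u) (z - u) ≤ 0

namespace IsLorentzProj

variable {K : Set (Fin (n+1) → ℝ)} {p u : Fin (n+1) → ℝ}

lemma lip_sub_self_eq_zero (hK : ∀ x ∈ K, ∀ s : ℝ, 0 ≤ s → s • x ∈ K)
    (h : IsLorentzProj K p u) : lip (p - u) u = 0 := by
  have hscale : ∀ s : ℝ, 0 ≤ s → (s - 1) * lip (p - u) u ≤ 0 := fun s hs => by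
    have hsu : s • u - u = (s - 1) • u := by rw [sub_smul, one_smul]
    simpa only [hsu, lip_smul_right] using h.2 _ (hK u h.1 s hs)
  linarith [hscale 0 le_rfl, hscale 2 zero_le_two]

lemma lip_sub_nonpos (hK : ∀ x ∈ K, ∀ s : ℝ, 0 ≤ s → s • x ∈ K)
    (h : IsLorentzProj K p u) {z : Fin (n+1) → ℝ} (hz : z ∈ K) : lip (p - u) z ≤ 0 := by
  simpa only [lip_sub_right, h.lip_sub_self_eq_zero hK, sub_zero] using h.2 z hz

lemma isMaxOn_lip_of_coneOf {κ : ℝ} (hκ : 0 < κ) {C : Set (Fin (n+1) → ℝ)} (hC : C ⊆ Hyp κ)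
    {t : ℝ} (ht : 0 < t) {q : Fin (n+1) → ℝ} (hq : q ∈ C)
    (h : IsLorentzProj (coneOf C) p (t • q)) : IsMaxOn (lip p) C q := by
  have hK : ∀ x ∈ coneOf C, ∀ s : ℝ, 0 ≤ s → s • x ∈ coneOf C :=
    fun x hx s hs => smul_mem_coneOf hx hs
  have horth := h.lip_sub_self_eq_zero hK
  have hpq : lip p q = t * (-1 / κ) := by
    rw [lip_sub_left, sub_eq_zero, lip_smul_right, lip_smul_left, lip_smul_right,
      (hC hq).1] at horth
    exact mul_left_cancel₀ ht.ne' horth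
  refine isMaxOn_iff.mpr fun z hz => ?_
  have hpz : lip p z ≤ t * lip q z := by
    have := h.lip_sub_nonpos hK (subset_coneOf C hz)
    rw [lip_sub_left, lip_smul_left] at this
    linarith
  calc lip p z ≤ t * lip q z := hpz
    _ ≤ t * (-1 / κ) := mul_le_mul_of_nonneg_left (lip_le_of_mem_Hyp hκ (hC hq) (hC hz)) ht.le
    _ = lip p q := hpq.symm

end IsLorentzProj

end Lorentz

theorem intrinsic_projection_from_lorentz_projection_general {n : ℕ} (κ : ℝ) (hκ : 0 < κ)
    (C : Set (Fin (n+1) → ℝ)) (hC : C ⊆ Hyp κ)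
    (p u : Fin (n+1) → ℝ) (hu : u ∈ coneOf C) (hu0 : u ≠ 0)
    (hL : ∀ z ∈ coneOf C, lip (p - u) (z - u) ≤ 0)
    (Pc : Fin (n+1) → ℝ)
    (hPuniq : ∀ y ∈ C, (∀ q ∈ C, lip p q ≤ lip p y) → y = Pc) :
    Pc = (Real.sqrt (-(κ * lip u u)))⁻¹ • u := by
  have hproj : IsLorentzProj (coneOf C) p u := ⟨hu, hL⟩
  obtain ⟨t, ht0, q, hq, rfl⟩ := hu
  have ht : 0 < t := ht0.lt_of_ne fun h => hu0 (by rw [← h, zero_smul])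
  have hqPc : q = Pc :=
    hPuniq q hq (isMaxOn_iff.mp (hproj.isMaxOn_lip_of_coneOf hκ hC ht hq))
  rw [sqrt_neg_mul_lip_smul_self hκ.ne' (hC hq) ht0, smul_smul, inv_mul_cancel₀ ht.ne',
    one_smul, hqPc]

/-- Every nonzero Lorentz projection of p into K_C gives the intrinsic κ-projection:
P_C(p) = u/√(−κ⟨u,u⟩), where P_C(p) is the (unique) maximizer of ⟨p,·⟩ over C. -/
theorem intrinsic_projection_from_lorentz_projection {n : ℕ} (κ : ℝ) (hκ : 0 < κ)
    (C : Set (Fin (n+1) → ℝ)) (hC : C ⊆ Hyp κ) (hCc : IsClosed C)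
    (hconv : Convex ℝ (coneOf C))
    (p u : Fin (n+1) → ℝ) (hp : p ∈ Hyp κ) (hu : u ∈ coneOf C) (hu0 : u ≠ 0)
    (hL : ∀ z ∈ coneOf C, lip (p - u) (z - u) ≤ 0)
    (Pc : Fin (n+1) → ℝ) (hPmem : Pc ∈ C)
    (hPmax : ∀ q ∈ C, lip p q ≤ lip p Pc)
    (hPuniq : ∀ y ∈ C, (∀ q ∈ C, lip p q ≤ lip p y) → y = Pc) :
    Pc = (Real.sqrt (-(κ * lip u u)))⁻¹ • u :=
  intrinsic_projection_from_lorentz_projection_general κ hκ C hC p u hu hu0 hL Pc hPuniq
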